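/- Let A be an n×n real matrix, P symmetric positive semidefinite with AᵀP + PA + CᵀC negative semidefinite, and let x solve x' = Ax with x(0) = x₀. Then for every T ≥ 0, ∫₀ᵀ ‖C x(τ)‖² dτ ≤ x₀ᵀ P x₀. -/

import Mathlib

/-!
The quadratic storage `V t = x tᵀ P x t` is nonnegative, and along the flow its derivative
`(A x)ᵀ P x + xᵀ P (A x)` is at most `-‖C x‖²` by the Lyapunov inequality. Integrating over
`[0, T]` gives `∫₀ᵀ ‖C x‖² ≤ V 0 - V T ≤ V 0`.
-/

open Matrix

section Deriv

variable {𝕜 ι m : Type*} [NontriviallyNormedField 𝕜] [Fintype ι]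
  {f g : 𝕜 → ι → 𝕜} {f' g' : ι → 𝕜} {t : 𝕜}

theorem HasDerivAt.dotProduct (hf : HasDerivAt f f' t) (hg : HasDerivAt g g' t) :
    HasDerivAt (fun s => f s ⬝ᵥ g s) (f' ⬝ᵥ g t + f t ⬝ᵥ g') t := by
  simp only [_root_.dotProduct, ← Finset.sum_add_distrib]
  exact HasDerivAt.fun_sum fun i _ => (hasDerivAt_pi.1 hf i).mul (hasDerivAt_pi.1 hg i)

theorem HasDerivAt.matrix_mulVec (M : Matrix m ι 𝕜) (hf : HasDerivAt f f' t) :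
    HasDerivAt (fun s => M *ᵥ f s) (M *ᵥ f') t :=
  hasDerivAt_pi.2 fun i => by
    have h := (hasDerivAt_const t (M i)).dotProduct hf
    rw [zero_dotProduct, zero_add] at h
    exact h

end Deriv

theorem dotProduct_lyapunov_mulVec {R ι κ : Type*} [CommRing R] [Fintype ι] [Fintype κ]
    (A P : Matrix ι ι R) (C : Matrix κ ι R) (v : ι → R) :
    v ⬝ᵥ (Aᵀ * P + P * A + Cᵀ * C) *ᵥ v
      = A *ᵥ v ⬝ᵥ P *ᵥ v + v ⬝ᵥ P *ᵥ (A *ᵥ v) + C *ᵥ v ⬝ᵥ C *ᵥ v := by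
  simp only [add_mulVec, dotProduct_add, ← mulVec_mulVec, dotProduct_mulVec _ _ (P *ᵥ v),
    dotProduct_mulVec _ _ (C *ᵥ v), vecMul_transpose]

theorem dotProduct_mulVec_self_le_of_lyapunov {ι κ : Type*} [Fintype ι] [Fintype κ]
    {A P : Matrix ι ι ℝ} {C : Matrix κ ι ℝ} (hLyap : (-(Aᵀ * P + P * A + Cᵀ * C)).PosSemidef)
    (v : ι → ℝ) :
    C *ᵥ v ⬝ᵥ C *ᵥ v ≤ -(A *ᵥ v ⬝ᵥ P *ᵥ v + v ⬝ᵥ P *ᵥ (A *ᵥ v)) := by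
  have h := hLyap.dotProduct_mulVec_nonneg v
  rw [star_trivial, neg_mulVec, dotProduct_neg, dotProduct_lyapunov_mulVec] at h
  linarith

/-- Integrated Lyapunov dissipation: ∫₀ᵀ ‖Cx(τ)‖² dτ ≤ x₀ᵀ P x₀. -/
theorem lyapunov_output_energy_bound {n p : ℕ}
    (A P : Matrix (Fin n) (Fin n) ℝ) (C : Matrix (Fin p) (Fin n) ℝ)
    (hP : P.PosSemidef)
    (hLyap : (-(Aᵀ * P + P * A + Cᵀ * C)).PosSemidef)
    (x : ℝ → Fin n → ℝ) (x₀ : Fin n → ℝ)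
    (hx : ∀ t, HasDerivAt x (A.mulVec (x t)) t)
    (hx0 : x 0 = x₀) :
    ∀ T, 0 ≤ T →
      ∫ τ in (0:ℝ)..T, (C.mulVec (x τ)) ⬝ᵥ (C.mulVec (x τ)) ≤ x₀ ⬝ᵥ P.mulVec x₀ := by
  intro T hT
  have hcx : Continuous x := continuous_iff_continuousAt.2 fun t => (hx t).continuousAt
  have hV : ∀ t, HasDerivAt (fun s => -(x s ⬝ᵥ P *ᵥ x s))
      (-(A *ᵥ x t ⬝ᵥ P *ᵥ x t + x t ⬝ᵥ P *ᵥ (A *ᵥ x t))) t := fun t =>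
    ((hx t).dotProduct ((hx t).matrix_mulVec P)).neg
  have hCx : Continuous fun t => C *ᵥ x t := continuous_const.matrix_mulVec hcx
  have hdissipation := intervalIntegral.integral_le_sub_of_hasDeriv_right_of_le hT
    (fun t _ => (hV t).continuousAt.continuousWithinAt) (fun t _ => (hV t).hasDerivWithinAt)
    (hCx.dotProduct hCx).integrableOn_Icc
    (fun t _ => dotProduct_mulVec_self_le_of_lyapunov hLyap (x t))
  have hVT := hP.dotProduct_mulVec_nonneg (x T)
  rw [star_trivial] at hVT
  rw [hx0] at hdissipation
  linarith
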